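/- The set {[[X, Y]]_𝔰 : X ∈ 𝔰, Y ∈ 𝔨} spans 𝔰 as a real vector space. Consequently, every ℝ-linear map α : 𝔰 → ℂ satisfying α([[X, Y]]_𝔰) = 0 for all X ∈ 𝔰 and Y ∈ 𝔨 vanishes identically. (This is the algebraic content of the statement that every G-invariant differential 1-form on the symmetric bounded domain 𝔻 is zero, so that the G-equivalence classes of G-invariant star-products on 𝔻 are parametrized by Z²(𝔻)^G[[ν]].) -/

import Mathlib

/-!
For a positive root `λ` and `X ∈ 𝔤_λ`, the element `Y = X + σ X` lies in `𝔨`, and `[·]_𝔰`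
kills `𝔨` because `𝔰 ∩ 𝔨 = 0`: `𝔫` is Killing-orthogonal to `𝔰 = 𝔞 ⊕ 𝔫`, so `κ` is positive
semidefinite on `𝔰`, while it is negative definite on `𝔨`. Hence `[[H, Y]]_𝔰 = 2 λ(H) X` for
`H ∈ 𝔞`, which gives `𝔫`, and `[[X, Y]]_𝔰 = [X, σ X] = κ(X, σ X) H_λ` by maximality of `𝔞`,
which gives every `H_λ`. The `H_λ` span `𝔞`: an element of `𝔞` on which all roots vanish acts
trivially on `𝔤` by the restricted root space decomposition (the operators `ad 𝔞` commute and
are symmetric for `-κ(·, σ ·)`), so its Killing norm vanishes.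
-/

/-- The restricted root space `𝔤_λ = {X ∈ 𝔤 : [H, X] = λ(H) • X for all H ∈ 𝔞}`. -/
def rootSpace' {𝔤 : Type} [LieRing 𝔤] [LieAlgebra ℝ 𝔤]
    (𝔞 : LieSubalgebra ℝ 𝔤) (lam : Module.Dual ℝ 𝔞) : Submodule ℝ 𝔤 where
  carrier := {X | ∀ H : 𝔞, ⁅(H : 𝔤), X⁆ = lam H • X}
  add_mem' := fun {a b} ha hb H => by rw [lie_add, ha H, hb H, smul_add]
  zero_mem' := fun H => by simp
  smul_mem' := fun t X hX H => by rw [lie_smul, hX H, smul_comm]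

/-- The subspace `𝔪 = {Z ∈ 𝔨 : [H, Z] = 0 for all H ∈ 𝔞}`, where `𝔨` is the fixed-point
set of the Cartan involution `σ`. -/
def mSub {𝔤 : Type} [LieRing 𝔤] [LieAlgebra ℝ 𝔤]
    (σ : 𝔤 →ₗ⁅ℝ⁆ 𝔤) (𝔞 : LieSubalgebra ℝ 𝔤) : Submodule ℝ 𝔤 where
  carrier := {Z | σ Z = Z ∧ ∀ H : 𝔞, ⁅(H : 𝔤), Z⁆ = 0}
  add_mem' := fun {a b} ha hb =>
    ⟨by rw [map_add, ha.1, hb.1], fun H => by rw [lie_add, ha.2 H, hb.2 H, add_zero]⟩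
  zero_mem' := ⟨σ.map_zero, fun H => lie_zero _⟩
  smul_mem' := fun t X hX =>
    ⟨by rw [map_smul, hX.1], fun H => by rw [lie_smul, hX.2 H, smul_zero]⟩

/-- The set of positive restricted roots, with respect to a basis `φ` of `𝔞*` and the map
`λ ↦ H_λ` determined by the Killing form. -/
def posRootSet {𝔤 : Type} [LieRing 𝔤] [LieAlgebra ℝ 𝔤] {r : ℕ}
    (𝔞 : LieSubalgebra ℝ 𝔤) (φ : Module.Basis (Fin r) ℝ (Module.Dual ℝ 𝔞))
    (Hv : Module.Dual ℝ 𝔞 → 𝔞) : Set (Module.Dual ℝ 𝔞) :=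
  {lam | lam ≠ 0 ∧ rootSpace' 𝔞 lam ≠ ⊥ ∧
    ∃ k : Fin r, 0 < φ k (Hv lam) ∧ ∀ j : Fin r, j < k → φ j (Hv lam) = 0}

/-- The subspace `𝔫 = ⊕_{λ ∈ Σ⁺} 𝔤_λ`. -/
def nSub {𝔤 : Type} [LieRing 𝔤] [LieAlgebra ℝ 𝔤] {r : ℕ}
    (𝔞 : LieSubalgebra ℝ 𝔤) (φ : Module.Basis (Fin r) ℝ (Module.Dual ℝ 𝔞))
    (Hv : Module.Dual ℝ 𝔞 → 𝔞) : Submodule ℝ 𝔤 :=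
  ⨆ lam ∈ posRootSet 𝔞 φ Hv, rootSpace' 𝔞 lam

open LieAlgebra Module.End

open scoped Function in
theorem LinearMap.iSup_iInf_eigenspace_eq_top_of_posDef {V : Type*} [AddCommGroup V]
    [Module ℝ V] [Module.Finite ℝ V] (B : LinearMap.BilinForm ℝ V)
    (hB : ∀ x y, B x y = B y x) (hpos : ∀ x, x ≠ 0 → 0 < B x x)
    {ι : Type*} (T : ι → Module.End ℝ V) (hT : ∀ i x y, B (T i x) y = B x (T i y))
    (hC : Pairwise (Commute on T)) :
    ⨆ χ : ι → ℝ, ⨅ i, eigenspace (T i) (χ i) = ⊤ := by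
  let c : InnerProductSpace.Core ℝ V :=
    { inner := fun x y => B x y
      conj_inner_symm := fun x y => hB y x
      re_inner_nonneg := fun x => by
        rcases eq_or_ne x 0 with rfl | hx
        · simp
        · exact (hpos x hx).le
      add_left := fun x y z => by simp
      smul_left := fun x y r => by simp
      definite := fun x hx => by_contra fun h => (hpos x h).ne' hx }
  let : NormedAddCommGroup V := c.toNormedAddCommGroup
  let : InnerProductSpace ℝ V := InnerProductSpace.ofCore c.toCore
  exact LinearMap.IsSymmetric.iSup_iInf_eq_top_of_commute hT hC

theorem Module.Basis.exists_apply_ne_zero_and_forall_lt {ι V : Type*} [LinearOrder ι]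
    [WellFoundedLT ι] [AddCommGroup V] [Module ℝ V] (φ : Module.Basis ι ℝ (Module.Dual ℝ V))
    {v : V} (hv : v ≠ 0) : ∃ k, φ k v ≠ 0 ∧ ∀ j < k, φ j v = 0 := by
  have hex : ∃ k, φ k v ≠ 0 := by
    by_contra! h
    exact hv <| (Module.eval_apply_eq_zero_iff ℝ v).mp <| φ.ext fun k => h k
  obtain ⟨k, hk, hmin⟩ := wellFounded_lt.has_min {k | φ k v ≠ 0} hex
  exact ⟨k, hk, fun j hj => by_contra fun h => hmin j h hj⟩

def IsLexPos {ι V : Type*} [LT ι] [AddCommGroup V] [Module ℝ V]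
    (φ : Module.Basis ι ℝ (Module.Dual ℝ V)) (v : V) : Prop :=
  ∃ k, 0 < φ k v ∧ ∀ j < k, φ j v = 0

section IsLexPos

variable {ι V : Type*} [LinearOrder ι] [AddCommGroup V] [Module ℝ V]
  {φ : Module.Basis ι ℝ (Module.Dual ℝ V)} {v : V}

theorem isLexPos_or_isLexPos_neg [WellFoundedLT ι] (hv : v ≠ 0) :
    IsLexPos φ v ∨ IsLexPos φ (-v) := by
  obtain ⟨k, hk, hmin⟩ := φ.exists_apply_ne_zero_and_forall_lt hv
  rcases hk.lt_or_gt with hneg | hpos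
  · exact .inr ⟨k, by simpa using hneg, fun j hj => by simp [hmin j hj]⟩
  · exact .inl ⟨k, hpos, hmin⟩

theorem IsLexPos.not_neg (h : IsLexPos φ v) : ¬ IsLexPos φ (-v) := by
  rintro ⟨k', hk', hmin'⟩
  obtain ⟨k, hk, hmin⟩ := h
  simp only [map_neg, neg_pos, neg_eq_zero] at hk' hmin'
  rcases lt_trichotomy k k' with h | rfl | h
  · exact hk.ne' (hmin' k h)
  · exact hk.not_gt hk'
  · exact hk'.ne (hmin k' h)

end IsLexPos

section RestrictedRoots

variable {𝔤 : Type} [LieRing 𝔤] [LieAlgebra ℝ 𝔤]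
  {σ : 𝔤 →ₗ⁅ℝ⁆ 𝔤} {𝔞 : LieSubalgebra ℝ 𝔤}

theorem killingForm_map_map_of_involutive (hσ : Function.Involutive σ) (x y : 𝔤) :
    killingForm ℝ 𝔤 (σ x) (σ y) = killingForm ℝ 𝔤 x y :=
  killingForm_of_equiv_apply (LieEquiv.ofBijective σ hσ.bijective) x y

noncomputable def cartanForm (σ : 𝔤 →ₗ⁅ℝ⁆ 𝔤) : LinearMap.BilinForm ℝ 𝔤 :=
  -(killingForm ℝ 𝔤).compl₂ (σ : 𝔤 →ₗ[ℝ] 𝔤)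

theorem cartanForm_apply (x y : 𝔤) : cartanForm σ x y = -killingForm ℝ 𝔤 x (σ y) := rfl

theorem cartanForm_comm (hσ : Function.Involutive σ) (x y : 𝔤) :
    cartanForm σ x y = cartanForm σ y x := by
  rw [cartanForm_apply, cartanForm_apply, ← killingForm_map_map_of_involutive hσ x, hσ,
    LieModule.traceForm_comm]

theorem cartanForm_lie_left (h𝔞p : ∀ X ∈ 𝔞, σ X = -X) {H : 𝔤} (hH : H ∈ 𝔞) (x y : 𝔤) :
    cartanForm σ ⁅H, x⁆ y = cartanForm σ x ⁅H, y⁆ := by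
  have hσHy : σ ⁅H, y⁆ = -⁅H, σ y⁆ := by rw [σ.map_lie, h𝔞p H hH, neg_lie]
  rw [cartanForm_apply, cartanForm_apply, hσHy, ← lie_skew, map_neg, LinearMap.neg_apply,
    LieModule.traceForm_apply_lie_apply, map_neg]

theorem killingForm_self_pos (hσpos : ∀ X : 𝔤, X ≠ 0 → 0 < -(killingForm ℝ 𝔤 X (σ X)))
    (h𝔞p : ∀ X ∈ 𝔞, σ X = -X) (H : 𝔞) (hH : H ≠ 0) : 0 < killingForm ℝ 𝔤 H H := by
  simpa [h𝔞p H H.2] using hσpos H (by simpa using hH)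

theorem mem_rootSpace'_zero (h𝔞ab : ∀ X Y : 𝔤, X ∈ 𝔞 → Y ∈ 𝔞 → ⁅X, Y⁆ = 0) {X : 𝔤}
    (hX : X ∈ 𝔞) : X ∈ rootSpace' 𝔞 0 := fun H => by
  rw [h𝔞ab _ _ H.2 hX, LinearMap.zero_apply, zero_smul]

theorem map_mem_rootSpace'_neg (h𝔞p : ∀ X ∈ 𝔞, σ X = -X) {lam : Module.Dual ℝ 𝔞} {X : 𝔤}
    (hX : X ∈ rootSpace' 𝔞 lam) : σ X ∈ rootSpace' 𝔞 (-lam) := fun H => by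
  have h := σ.map_lie (H : 𝔤) X
  rw [hX H, h𝔞p _ H.2, map_smul, neg_lie] at h
  rw [LinearMap.neg_apply, neg_smul, h, neg_neg]

theorem killingForm_eq_zero_of_mem_rootSpace' {lam mu : Module.Dual ℝ 𝔞} (h : lam + mu ≠ 0)
    {X Y : 𝔤} (hX : X ∈ rootSpace' 𝔞 lam) (hY : Y ∈ rootSpace' 𝔞 mu) :
    killingForm ℝ 𝔤 X Y = 0 := by
  obtain ⟨H, hH⟩ : ∃ H : 𝔞, lam H + mu H ≠ 0 := by
    by_contra! h'
    exact h (LinearMap.ext h')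
  have hinv := LieModule.traceForm_apply_lie_apply ℝ 𝔤 𝔤 X (H : 𝔤) Y
  rw [← lie_skew, hX H, hY H] at hinv
  simp only [map_neg, map_smul, LinearMap.neg_apply, LinearMap.smul_apply, smul_eq_mul] at hinv
  exact (mul_eq_zero.mp (by linarith : (lam H + mu H) * killingForm ℝ 𝔤 X Y = 0)).resolve_left hH

theorem iSup_rootSpace'_eq_top [Module.Finite ℝ 𝔤] (hσinv : Function.Involutive σ)
    (hσpos : ∀ X : 𝔤, X ≠ 0 → 0 < -(killingForm ℝ 𝔤 X (σ X)))
    (h𝔞ab : ∀ X Y : 𝔤, X ∈ 𝔞 → Y ∈ 𝔞 → ⁅X, Y⁆ = 0) (h𝔞p : ∀ X ∈ 𝔞, σ X = -X) :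
    ⨆ lam : Module.Dual ℝ 𝔞, rootSpace' 𝔞 lam = ⊤ := by
  have hdiag := LinearMap.iSup_iInf_eigenspace_eq_top_of_posDef (cartanForm σ)
    (cartanForm_comm hσinv) hσpos (fun H : 𝔞 => ad ℝ 𝔤 H)
    (fun H => cartanForm_lie_left h𝔞p H.2) fun H H' _ => LinearMap.ext fun w => by
      change ⁅(H : 𝔤), ⁅(H' : 𝔤), w⁆⁆ = ⁅(H' : 𝔤), ⁅(H : 𝔤), w⁆⁆
      rw [leibniz_lie, h𝔞ab _ _ H.2 H'.2, zero_lie, zero_add]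
  rw [eq_top_iff, ← hdiag]
  refine iSup_le fun χ X hX => ?_
  rcases eq_or_ne X 0 with rfl | hX0
  · exact zero_mem _
  have hχ : ∀ H : 𝔞, ⁅(H : 𝔤), X⁆ = χ H • X := fun H =>
    mem_eigenspace_iff.mp ((Submodule.mem_iInf _).mp hX H)
  -- `χ` is linear because it is read off from the nonzero joint eigenvector `X`.
  let lam : Module.Dual ℝ 𝔞 :=
    { toFun := χ
      map_add' := fun H H' => smul_left_injective ℝ hX0 <| by
        simp only [← hχ, AddMemClass.coe_add, add_lie, add_smul]
      map_smul' := fun t H => smul_left_injective ℝ hX0 <| by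
        simp only [← hχ, SetLike.val_smul, smul_lie, Real.ringHom_apply, smul_eq_mul, mul_smul] }
  exact Submodule.mem_iSup_of_mem lam hχ

theorem lie_eq_zero_of_forall_root_apply_eq_zero
    (htop : ⨆ lam : Module.Dual ℝ 𝔞, rootSpace' 𝔞 lam = ⊤) {H : 𝔞}
    (hH : ∀ lam, rootSpace' 𝔞 lam ≠ ⊥ → lam H = 0) (X : 𝔤) : ⁅(H : 𝔤), X⁆ = 0 := by
  suffices ⊤ ≤ LinearMap.ker (ad ℝ 𝔤 H) from this Submodule.mem_top
  rw [← htop]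
  refine iSup_le fun lam Y hY => ?_
  by_cases hbot : rootSpace' 𝔞 lam = ⊥
  · rw [hbot, Submodule.mem_bot] at hY
    simp [hY]
  · rw [LinearMap.mem_ker, ad_apply, hY H, hH lam hbot, zero_smul]

theorem eq_zero_of_forall_root_apply_eq_zero [Module.Finite ℝ 𝔤]
    (htop : ⨆ lam : Module.Dual ℝ 𝔞, rootSpace' 𝔞 lam = ⊤)
    (h𝔞pos : ∀ H : 𝔞, H ≠ 0 → 0 < killingForm ℝ 𝔤 H H) {H : 𝔞}
    (hH : ∀ lam, rootSpace' 𝔞 lam ≠ ⊥ → lam H = 0) : H = 0 := by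
  have had : ad ℝ 𝔤 H = 0 := LinearMap.ext (lie_eq_zero_of_forall_root_apply_eq_zero htop hH)
  by_contra hH0
  have := h𝔞pos H hH0
  rw [killingForm_apply_apply, had, LinearMap.zero_comp, map_zero] at this
  exact this.false

theorem eq_of_forall_killingForm_eq (h𝔞pos : ∀ H : 𝔞, H ≠ 0 → 0 < killingForm ℝ 𝔤 H H)
    {H H' : 𝔞} (h : ∀ K : 𝔞, killingForm ℝ 𝔤 H K = killingForm ℝ 𝔤 H' K) : H = H' := by
  by_contra hne
  have := h𝔞pos (H - H') (sub_ne_zero.mpr hne)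
  simp only [AddSubgroupClass.coe_sub, map_sub, LinearMap.sub_apply, h, sub_self] at this
  exact this.false

variable {r : ℕ} {φ : Module.Basis (Fin r) ℝ (Module.Dual ℝ 𝔞)} {Hv : Module.Dual ℝ 𝔞 → 𝔞}

theorem Hv_ne_zero
    (hHv : ∀ (lam : Module.Dual ℝ 𝔞) (H : 𝔞), killingForm ℝ 𝔤 (Hv lam : 𝔤) (H : 𝔤) = lam H)
    {lam : Module.Dual ℝ 𝔞} (hlam : lam ≠ 0) : Hv lam ≠ 0 := fun h =>
  hlam <| LinearMap.ext fun H => by rw [← hHv, h]; simp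

theorem Hv_neg (h𝔞pos : ∀ H : 𝔞, H ≠ 0 → 0 < killingForm ℝ 𝔤 H H)
    (hHv : ∀ (lam : Module.Dual ℝ 𝔞) (H : 𝔞), killingForm ℝ 𝔤 (Hv lam : 𝔤) (H : 𝔤) = lam H)
    (lam : Module.Dual ℝ 𝔞) :
    Hv (-lam) = -Hv lam :=
  eq_of_forall_killingForm_eq h𝔞pos fun K => by simp [hHv]

theorem rootSpace'_neg_ne_bot (hσinv : Function.Involutive σ) (h𝔞p : ∀ X ∈ 𝔞, σ X = -X)
    {lam : Module.Dual ℝ 𝔞} (hroot : rootSpace' 𝔞 lam ≠ ⊥) : rootSpace' 𝔞 (-lam) ≠ ⊥ := by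
  obtain ⟨X, hX, hX0⟩ := Submodule.exists_mem_ne_zero_of_ne_bot hroot
  refine (Submodule.ne_bot_iff _).mpr ⟨σ X, map_mem_rootSpace'_neg h𝔞p hX, fun h => hX0 ?_⟩
  exact hσinv.injective (h.trans σ.map_zero.symm)

theorem mem_posRootSet_or_neg_mem (hσinv : Function.Involutive σ) (h𝔞p : ∀ X ∈ 𝔞, σ X = -X)
    (h𝔞pos : ∀ H : 𝔞, H ≠ 0 → 0 < killingForm ℝ 𝔤 H H)
    (hHv : ∀ (lam : Module.Dual ℝ 𝔞) (H : 𝔞), killingForm ℝ 𝔤 (Hv lam : 𝔤) (H : 𝔤) = lam H)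
    {lam : Module.Dual ℝ 𝔞} (hlam : lam ≠ 0) (hroot : rootSpace' 𝔞 lam ≠ ⊥) :
    lam ∈ posRootSet 𝔞 φ Hv ∨ -lam ∈ posRootSet 𝔞 φ Hv := by
  rcases isLexPos_or_isLexPos_neg (φ := φ) (Hv_ne_zero hHv hlam) with h | h
  · exact .inl ⟨hlam, hroot, h⟩
  · refine .inr ⟨neg_ne_zero.mpr hlam, rootSpace'_neg_ne_bot hσinv h𝔞p hroot, ?_⟩
    rw [Hv_neg h𝔞pos hHv]
    exact h

theorem add_ne_zero_of_mem_posRootSet (h𝔞pos : ∀ H : 𝔞, H ≠ 0 → 0 < killingForm ℝ 𝔤 H H)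
    (hHv : ∀ (lam : Module.Dual ℝ 𝔞) (H : 𝔞), killingForm ℝ 𝔤 (Hv lam : 𝔤) (H : 𝔤) = lam H)
    {lam mu : Module.Dual ℝ 𝔞} (hlam : lam ∈ posRootSet 𝔞 φ Hv) (hmu : mu ∈ posRootSet 𝔞 φ Hv) :
    lam + mu ≠ 0 := fun h => by
  have hneg : IsLexPos φ (-Hv lam) := by
    rw [← Hv_neg h𝔞pos hHv, neg_eq_of_add_eq_zero_right h]
    exact hmu.2.2
  exact IsLexPos.not_neg hlam.2.2 hneg

theorem killingForm_eq_zero_of_mem_nSub (h𝔞ab : ∀ X Y : 𝔤, X ∈ 𝔞 → Y ∈ 𝔞 → ⁅X, Y⁆ = 0)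
    (h𝔞pos : ∀ H : 𝔞, H ≠ 0 → 0 < killingForm ℝ 𝔤 H H)
    (hHv : ∀ (lam : Module.Dual ℝ 𝔞) (H : 𝔞), killingForm ℝ 𝔤 (Hv lam : 𝔤) (H : 𝔤) = lam H)
    {z n : 𝔤}
    (hz : z ∈ 𝔞.toSubmodule ⊔ nSub 𝔞 φ Hv) (hn : n ∈ nSub 𝔞 φ Hv) :
    killingForm ℝ 𝔤 z n = 0 := by
  have horth : ∀ lam ∈ posRootSet 𝔞 φ Hv, ∀ n ∈ rootSpace' 𝔞 lam,
      𝔞.toSubmodule ⊔ nSub 𝔞 φ Hv ≤ LinearMap.ker ((killingForm ℝ 𝔤).flip n) :=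
    fun lam hlam n hn => sup_le
      (fun a ha => killingForm_eq_zero_of_mem_rootSpace' (by simpa using hlam.1)
        (mem_rootSpace'_zero h𝔞ab ha) hn)
      (iSup₂_le fun mu hmu y hy => killingForm_eq_zero_of_mem_rootSpace'
        (add_ne_zero_of_mem_posRootSet h𝔞pos hHv hmu hlam) hy hn)
  have : nSub 𝔞 φ Hv ≤ LinearMap.ker (killingForm ℝ 𝔤 z) :=
    iSup₂_le fun lam hlam n hn => horth lam hlam n hn hz
  exact this hn

theorem eq_zero_of_mem_sup_nSub_of_map_eq_self
    (hσpos : ∀ X : 𝔤, X ≠ 0 → 0 < -(killingForm ℝ 𝔤 X (σ X)))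
    (h𝔞ab : ∀ X Y : 𝔤, X ∈ 𝔞 → Y ∈ 𝔞 → ⁅X, Y⁆ = 0) (h𝔞p : ∀ X ∈ 𝔞, σ X = -X)
    (hHv : ∀ (lam : Module.Dual ℝ 𝔞) (H : 𝔞), killingForm ℝ 𝔤 (Hv lam : 𝔤) (H : 𝔤) = lam H) {z : 𝔤}
    (hz : z ∈ 𝔞.toSubmodule ⊔ nSub 𝔞 φ Hv) (hσz : σ z = z) : z = 0 := by
  have h𝔞pos := killingForm_self_pos hσpos h𝔞p
  obtain ⟨a, ha, n, hn, rfl⟩ := Submodule.mem_sup.mp hz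
  have ha' : a ∈ 𝔞.toSubmodule ⊔ nSub 𝔞 φ Hv := Submodule.mem_sup_left ha
  have han : killingForm ℝ 𝔤 a n = 0 := killingForm_eq_zero_of_mem_nSub h𝔞ab h𝔞pos hHv ha' hn
  have hnn : killingForm ℝ 𝔤 n n = 0 :=
    killingForm_eq_zero_of_mem_nSub h𝔞ab h𝔞pos hHv (Submodule.mem_sup_right hn) hn
  have hna : killingForm ℝ 𝔤 n a = 0 := by rw [LieModule.traceForm_comm]; exact han
  have hself : killingForm ℝ 𝔤 (a + n) (a + n) = killingForm ℝ 𝔤 a a := by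
    simp only [map_add, LinearMap.add_apply, han, hnn, hna, add_zero]
  have ha_nonneg : 0 ≤ killingForm ℝ 𝔤 a a := by
    rcases eq_or_ne a 0 with rfl | ha0
    · simp
    · exact (h𝔞pos ⟨a, ha⟩ fun h => ha0 (congrArg Subtype.val h)).le
  by_contra h
  have := hσpos _ h
  rw [hσz, hself] at this
  linarith

theorem mem_of_lie_eq_zero_of_map_eq_neg (h𝔞ab : ∀ X Y : 𝔤, X ∈ 𝔞 → Y ∈ 𝔞 → ⁅X, Y⁆ = 0)
    (h𝔞p : ∀ X ∈ 𝔞, σ X = -X)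
    (h𝔞max : ∀ 𝔟 : LieSubalgebra ℝ 𝔤, (∀ X Y : 𝔤, X ∈ 𝔟 → Y ∈ 𝔟 → ⁅X, Y⁆ = 0) →
      (∀ X ∈ 𝔟, σ X = -X) → 𝔞 ≤ 𝔟 → 𝔟 = 𝔞)
    {z : 𝔤} (hz : ∀ H ∈ 𝔞, ⁅H, z⁆ = 0) (hσz : σ z = -z) : z ∈ 𝔞 := by
  have habel : ∀ x ∈ 𝔞.toSubmodule ⊔ ℝ ∙ z, ∀ y ∈ 𝔞.toSubmodule ⊔ ℝ ∙ z, ⁅x, y⁆ = 0 := by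
    intro x hx y hy
    obtain ⟨a, ha, _, hx', rfl⟩ := Submodule.mem_sup.mp hx
    obtain ⟨b, hb, _, hy', rfl⟩ := Submodule.mem_sup.mp hy
    obtain ⟨t, rfl⟩ := Submodule.mem_span_singleton.mp hx'
    obtain ⟨u, rfl⟩ := Submodule.mem_span_singleton.mp hy'
    simp only [add_lie, lie_add, lie_smul, smul_lie, h𝔞ab a b ha hb, hz a ha, ← lie_skew z b,
      hz b hb, lie_self, neg_zero, smul_zero, add_zero]
  let 𝔟 : LieSubalgebra ℝ 𝔤 :=
    { 𝔞.toSubmodule ⊔ ℝ ∙ z with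
      lie_mem' := fun hx hy => (habel _ hx _ hy).symm ▸ (𝔞.toSubmodule ⊔ ℝ ∙ z).zero_mem }
  have h𝔟p : ∀ x ∈ 𝔟, σ x = -x := by
    intro x hx
    obtain ⟨a, ha, _, hx', rfl⟩ := Submodule.mem_sup.mp hx
    obtain ⟨t, rfl⟩ := Submodule.mem_span_singleton.mp hx'
    rw [map_add, map_smul, h𝔞p a ha, hσz, smul_neg, neg_add]
  rw [← h𝔞max 𝔟 (fun x y hx hy => habel x hx y hy) h𝔟p fun x hx => Submodule.mem_sup_left hx]
  exact Submodule.mem_sup_right (Submodule.mem_span_singleton_self z)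

theorem lie_map_self_mem (hσinv : Function.Involutive σ)
    (h𝔞ab : ∀ X Y : 𝔤, X ∈ 𝔞 → Y ∈ 𝔞 → ⁅X, Y⁆ = 0) (h𝔞p : ∀ X ∈ 𝔞, σ X = -X)
    (h𝔞max : ∀ 𝔟 : LieSubalgebra ℝ 𝔤, (∀ X Y : 𝔤, X ∈ 𝔟 → Y ∈ 𝔟 → ⁅X, Y⁆ = 0) →
      (∀ X ∈ 𝔟, σ X = -X) → 𝔞 ≤ 𝔟 → 𝔟 = 𝔞)
    {lam : Module.Dual ℝ 𝔞} {X : 𝔤} (hX : X ∈ rootSpace' 𝔞 lam) : ⁅X, σ X⁆ ∈ 𝔞 := by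
  refine mem_of_lie_eq_zero_of_map_eq_neg h𝔞ab h𝔞p h𝔞max (fun H hH => ?_) ?_
  · have hσX := map_mem_rootSpace'_neg h𝔞p hX ⟨H, hH⟩
    simp only [leibniz_lie, hX ⟨H, hH⟩, hσX, smul_lie, lie_smul, LinearMap.neg_apply, neg_smul,
      lie_neg, add_neg_cancel]
  · rw [σ.map_lie, hσinv, ← lie_skew]

theorem lie_map_self_eq_smul_Hv (hσinv : Function.Involutive σ)
    (hσpos : ∀ X : 𝔤, X ≠ 0 → 0 < -(killingForm ℝ 𝔤 X (σ X)))
    (h𝔞ab : ∀ X Y : 𝔤, X ∈ 𝔞 → Y ∈ 𝔞 → ⁅X, Y⁆ = 0) (h𝔞p : ∀ X ∈ 𝔞, σ X = -X)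
    (h𝔞max : ∀ 𝔟 : LieSubalgebra ℝ 𝔤, (∀ X Y : 𝔤, X ∈ 𝔟 → Y ∈ 𝔟 → ⁅X, Y⁆ = 0) →
      (∀ X ∈ 𝔟, σ X = -X) → 𝔞 ≤ 𝔟 → 𝔟 = 𝔞)
    (hHv : ∀ (lam : Module.Dual ℝ 𝔞) (H : 𝔞),
      killingForm ℝ 𝔤 (Hv lam : 𝔤) (H : 𝔤) = lam H)
    {lam : Module.Dual ℝ 𝔞} {X : 𝔤} (hX : X ∈ rootSpace' 𝔞 lam) :
    ⁅X, σ X⁆ = killingForm ℝ 𝔤 X (σ X) • (Hv lam : 𝔤) := by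
  have hz := lie_map_self_mem hσinv h𝔞ab h𝔞p h𝔞max hX
  have := eq_of_forall_killingForm_eq (killingForm_self_pos hσpos h𝔞p)
    (H := ⟨_, hz⟩) (H' := killingForm ℝ 𝔤 X (σ X) • Hv lam) fun K => by
      have hσX := map_mem_rootSpace'_neg h𝔞p hX K
      rw [LieModule.traceForm_apply_lie_apply, ← lie_skew, hσX]
      simp [hHv, mul_comm]
  exact congrArg Subtype.val this

theorem span_Hv_posRootSet_eq_top [Module.Finite ℝ 𝔤] (hσinv : Function.Involutive σ)
    (hσpos : ∀ X : 𝔤, X ≠ 0 → 0 < -(killingForm ℝ 𝔤 X (σ X)))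
    (h𝔞ab : ∀ X Y : 𝔤, X ∈ 𝔞 → Y ∈ 𝔞 → ⁅X, Y⁆ = 0) (h𝔞p : ∀ X ∈ 𝔞, σ X = -X)
    (hHv : ∀ (lam : Module.Dual ℝ 𝔞) (H : 𝔞),
      killingForm ℝ 𝔤 (Hv lam : 𝔤) (H : 𝔤) = lam H) :
    Submodule.span ℝ (Hv '' posRootSet 𝔞 φ Hv) = ⊤ := by
  have h𝔞pos := killingForm_self_pos hσpos h𝔞p
  by_contra hne
  obtain ⟨f, hf0, hle⟩ := Submodule.exists_le_ker_of_lt_top _ (lt_top_iff_ne_top.mpr hne)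
  -- `λ(H_f) = κ(H_λ, H_f) = f(H_λ)` vanishes for positive roots, hence for all roots.
  have hpos : ∀ lam ∈ posRootSet 𝔞 φ Hv, lam (Hv f) = 0 := fun lam hlam => by
    rw [← hHv, LieModule.traceForm_comm, hHv]
    exact hle (Submodule.subset_span ⟨lam, hlam, rfl⟩)
  have hf : Hv f = 0 := by
    refine eq_zero_of_forall_root_apply_eq_zero (iSup_rootSpace'_eq_top hσinv hσpos h𝔞ab h𝔞p)
      h𝔞pos fun lam hroot => ?_
    rcases eq_or_ne lam 0 with rfl | hlam
    · rfl
    rcases mem_posRootSet_or_neg_mem hσinv h𝔞p h𝔞pos hHv hlam hroot with h | h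
    · exact hpos lam h
    · simpa using hpos _ h
  exact hf0 (LinearMap.ext fun H => by rw [← hHv, hf]; simp)

theorem proj_eq_zero_of_map_eq_self (hσpos : ∀ X : 𝔤, X ≠ 0 → 0 < -(killingForm ℝ 𝔤 X (σ X)))
    (h𝔞ab : ∀ X Y : 𝔤, X ∈ 𝔞 → Y ∈ 𝔞 → ⁅X, Y⁆ = 0) (h𝔞p : ∀ X ∈ 𝔞, σ X = -X)
    (hHv : ∀ (lam : Module.Dual ℝ 𝔞) (H : 𝔞),
      killingForm ℝ 𝔤 (Hv lam : 𝔤) (H : 𝔤) = lam H)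
    {𝔰 : LieSubalgebra ℝ 𝔤} (h𝔰 : 𝔰.toSubmodule = 𝔞.toSubmodule ⊔ nSub 𝔞 φ Hv)
    {proj : 𝔤 →ₗ[ℝ] 𝔰} (hproj𝔨 : ∀ X : 𝔤, σ (X - (proj X : 𝔤)) = X - (proj X : 𝔤))
    {Y : 𝔤} (hY : σ Y = Y) : proj Y = 0 := by
  have hσ : σ (proj Y : 𝔤) = proj Y := by
    have := hproj𝔨 Y
    rwa [map_sub, hY, sub_right_inj] at this
  have hmem : (proj Y : 𝔤) ∈ 𝔞.toSubmodule ⊔ nSub 𝔞 φ Hv := h𝔰 ▸ (proj Y).2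
  exact Subtype.ext (eq_zero_of_mem_sup_nSub_of_map_eq_self hσpos h𝔞ab h𝔞p hHv hmem hσ)

def projBracketSpan (σ : 𝔤 →ₗ⁅ℝ⁆ 𝔤) (𝔰 : LieSubalgebra ℝ 𝔤) (proj : 𝔤 →ₗ[ℝ] 𝔰) :
    Submodule ℝ 𝔰 :=
  Submodule.span ℝ {S : 𝔰 | ∃ X : 𝔰, ∃ Y : 𝔤, σ Y = Y ∧ S = proj ⁅(X : 𝔤), Y⁆}

variable {𝔰 : LieSubalgebra ℝ 𝔤} {proj : 𝔤 →ₗ[ℝ] 𝔰}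

theorem proj_lie_mem_projBracketSpan (X : 𝔰) {Y : 𝔤} (hY : σ Y = Y) :
    proj ⁅(X : 𝔤), Y⁆ ∈ projBracketSpan σ 𝔰 proj :=
  Submodule.subset_span ⟨X, Y, hY, rfl⟩

theorem rootSpace'_le_map_projBracketSpan (hσinv : Function.Involutive σ)
    (h𝔞p : ∀ X ∈ 𝔞, σ X = -X) (h𝔞𝔰 : 𝔞.toSubmodule ≤ 𝔰.toSubmodule)
    (hproj𝔰 : ∀ S : 𝔰, proj (S : 𝔤) = S) (hprojk : ∀ Y : 𝔤, σ Y = Y → proj Y = 0)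
    {lam : Module.Dual ℝ 𝔞} (hlam : lam ≠ 0) (hroot𝔰 : rootSpace' 𝔞 lam ≤ 𝔰.toSubmodule) :
    rootSpace' 𝔞 lam ≤ (projBracketSpan σ 𝔰 proj).map 𝔰.toSubmodule.subtype := by
  intro X hX
  obtain ⟨H, hH⟩ : ∃ H : 𝔞, lam H ≠ 0 := by
    by_contra! h
    exact hlam (LinearMap.ext h)
  let XS : 𝔰 := ⟨X, hroot𝔰 hX⟩
  have hY : σ (X + σ X) = X + σ X := by rw [map_add, hσinv, add_comm]
  have hprojσX : proj (σ X) = -XS := by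
    rw [← add_sub_cancel_left X (σ X), map_sub, hprojk _ hY, zero_sub, hproj𝔰 XS]
  -- `[H, X + σ X] = λ(H) (X - σ X)`, and `[σ X]_𝔰 = -X` because `X + σ X ∈ 𝔨`.
  have hbracket : proj ⁅(H : 𝔤), X + σ X⁆ = (2 * lam H) • XS := by
    rw [lie_add, hX H, map_mem_rootSpace'_neg h𝔞p hX H, map_add, map_smul, map_smul,
      hproj𝔰 XS, hprojσX, LinearMap.neg_apply, neg_smul, smul_neg, neg_neg, two_mul, add_smul]
  have hmem : proj ⁅(H : 𝔤), X + σ X⁆ ∈ projBracketSpan σ 𝔰 proj :=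
    proj_lie_mem_projBracketSpan ⟨(H : 𝔤), h𝔞𝔰 H.2⟩ hY
  rw [hbracket] at hmem
  refine ⟨XS, ?_, rfl⟩
  exact (Submodule.smul_mem_iff _ (mul_ne_zero two_ne_zero hH)).mp hmem

theorem Hv_mem_map_projBracketSpan (hσinv : Function.Involutive σ)
    (hσpos : ∀ X : 𝔤, X ≠ 0 → 0 < -(killingForm ℝ 𝔤 X (σ X)))
    (h𝔞ab : ∀ X Y : 𝔤, X ∈ 𝔞 → Y ∈ 𝔞 → ⁅X, Y⁆ = 0) (h𝔞p : ∀ X ∈ 𝔞, σ X = -X)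
    (h𝔞max : ∀ 𝔟 : LieSubalgebra ℝ 𝔤, (∀ X Y : 𝔤, X ∈ 𝔟 → Y ∈ 𝔟 → ⁅X, Y⁆ = 0) →
      (∀ X ∈ 𝔟, σ X = -X) → 𝔞 ≤ 𝔟 → 𝔟 = 𝔞)
    (hHv : ∀ (lam : Module.Dual ℝ 𝔞) (H : 𝔞),
      killingForm ℝ 𝔤 (Hv lam : 𝔤) (H : 𝔤) = lam H)
    (h𝔞𝔰 : 𝔞.toSubmodule ≤ 𝔰.toSubmodule) (hproj𝔰 : ∀ S : 𝔰, proj (S : 𝔤) = S)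
    {lam : Module.Dual ℝ 𝔞} (hroot : rootSpace' 𝔞 lam ≠ ⊥)
    (hroot𝔰 : rootSpace' 𝔞 lam ≤ 𝔰.toSubmodule) :
    (Hv lam : 𝔤) ∈ (projBracketSpan σ 𝔰 proj).map 𝔰.toSubmodule.subtype := by
  obtain ⟨X, hX, hX0⟩ := Submodule.exists_mem_ne_zero_of_ne_bot hroot
  have hz := lie_map_self_mem hσinv h𝔞ab h𝔞p h𝔞max hX
  have hc : killingForm ℝ 𝔤 X (σ X) ≠ 0 := fun h => by simpa [h] using hσpos X hX0
  -- `[X, X + σ X] = [X, σ X]` already lies in `𝔞 ⊆ 𝔰`.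
  have hmem := proj_lie_mem_projBracketSpan (proj := proj) ⟨X, hroot𝔰 hX⟩
    (show σ (X + σ X) = X + σ X by rw [map_add, hσinv, add_comm])
  rw [show ⁅X, X + σ X⁆ = ((⟨_, h𝔞𝔰 hz⟩ : 𝔰) : 𝔤) by simp, hproj𝔰] at hmem
  refine ⟨(killingForm ℝ 𝔤 X (σ X))⁻¹ • ⟨_, h𝔞𝔰 hz⟩, Submodule.smul_mem _ _ hmem, ?_⟩
  simp [lie_map_self_eq_smul_Hv hσinv hσpos h𝔞ab h𝔞p h𝔞max hHv hX, hc]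

theorem toSubmodule_le_map_projBracketSpan [Module.Finite ℝ 𝔤] (hσinv : Function.Involutive σ)
    (hσpos : ∀ X : 𝔤, X ≠ 0 → 0 < -(killingForm ℝ 𝔤 X (σ X)))
    (h𝔞ab : ∀ X Y : 𝔤, X ∈ 𝔞 → Y ∈ 𝔞 → ⁅X, Y⁆ = 0) (h𝔞p : ∀ X ∈ 𝔞, σ X = -X)
    (h𝔞max : ∀ 𝔟 : LieSubalgebra ℝ 𝔤, (∀ X Y : 𝔤, X ∈ 𝔟 → Y ∈ 𝔟 → ⁅X, Y⁆ = 0) →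
      (∀ X ∈ 𝔟, σ X = -X) → 𝔞 ≤ 𝔟 → 𝔟 = 𝔞)
    (hHv : ∀ (lam : Module.Dual ℝ 𝔞) (H : 𝔞),
      killingForm ℝ 𝔤 (Hv lam : 𝔤) (H : 𝔤) = lam H)
    (h𝔞𝔰 : 𝔞.toSubmodule ≤ 𝔰.toSubmodule) (hproj𝔰 : ∀ S : 𝔰, proj (S : 𝔤) = S)
    (hroot𝔰 : ∀ lam ∈ posRootSet 𝔞 φ Hv, rootSpace' 𝔞 lam ≤ 𝔰.toSubmodule) :
    𝔞.toSubmodule ≤ (projBracketSpan σ 𝔰 proj).map 𝔰.toSubmodule.subtype := by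
  have hspan : Submodule.span ℝ (Hv '' posRootSet 𝔞 φ Hv) ≤
      ((projBracketSpan σ 𝔰 proj).map 𝔰.toSubmodule.subtype).comap 𝔞.toSubmodule.subtype :=
    Submodule.span_le.mpr <| by
      rintro _ ⟨lam, hlam, rfl⟩
      exact Hv_mem_map_projBracketSpan hσinv hσpos h𝔞ab h𝔞p h𝔞max hHv h𝔞𝔰 hproj𝔰 hlam.2.1
        (hroot𝔰 lam hlam)
  rw [span_Hv_posRootSet_eq_top hσinv hσpos h𝔞ab h𝔞p hHv] at hspan
  exact fun a ha => hspan (Submodule.mem_top (x := ⟨a, ha⟩))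

end RestrictedRoots

theorem statement7_general
    (𝔤 : Type) [LieRing 𝔤] [LieAlgebra ℝ 𝔤] [Module.Finite ℝ 𝔤]
    -- `σ` is a Cartan involution of `𝔤`:
    (σ : 𝔤 →ₗ⁅ℝ⁆ 𝔤) (hσinv : ∀ X, σ (σ X) = X)
    (hσpos : ∀ X : 𝔤, X ≠ 0 → 0 < -(killingForm ℝ 𝔤 X (σ X)))
    -- `𝔞` is a maximal abelian subalgebra contained in `𝔭 = {X : σ X = -X}`:
    (𝔞 : LieSubalgebra ℝ 𝔤)
    (h𝔞ab : ∀ X Y : 𝔤, X ∈ 𝔞 → Y ∈ 𝔞 → ⁅X, Y⁆ = 0)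
    (h𝔞p : ∀ X ∈ 𝔞, σ X = -X)
    (h𝔞max : ∀ 𝔟 : LieSubalgebra ℝ 𝔤, (∀ X Y : 𝔤, X ∈ 𝔟 → Y ∈ 𝔟 → ⁅X, Y⁆ = 0) →
      (∀ X ∈ 𝔟, σ X = -X) → 𝔞 ≤ 𝔟 → 𝔟 = 𝔞)
    -- `φ` is a basis of `𝔞*` and `Hv lam = H_λ` is determined by the Killing form:
    (r : ℕ) (φ : Module.Basis (Fin r) ℝ (Module.Dual ℝ 𝔞))
    (Hv : Module.Dual ℝ 𝔞 → 𝔞)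
    (hHv : ∀ (lam : Module.Dual ℝ 𝔞) (H : 𝔞),
      killingForm ℝ 𝔤 (Hv lam : 𝔤) (H : 𝔤) = lam H)
    -- `𝔰` is the Iwasawa subalgebra `𝔞 ⊕ 𝔫`:
    (𝔰 : LieSubalgebra ℝ 𝔤) (h𝔰 : 𝔰.toSubmodule = 𝔞.toSubmodule ⊔ nSub 𝔞 φ Hv)
    -- `proj = [·]_𝔰` is the projection of `𝔤` onto `𝔰` along `𝔨` (Iwasawa decomposition):
    (proj : 𝔤 →ₗ[ℝ] 𝔰)
    (hproj𝔨 : ∀ X : 𝔤, σ (X - (proj X : 𝔤)) = X - (proj X : 𝔤))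
    (hproj𝔰 : ∀ S : 𝔰, proj (S : 𝔤) = S) :
    -- `{[[X, Y]]_𝔰 : X ∈ 𝔰, Y ∈ 𝔨}` spans `𝔰` …
    Submodule.span ℝ {S : 𝔰 | ∃ X : 𝔰, ∃ Y : 𝔤, σ Y = Y ∧ S = proj ⁅(X : 𝔤), Y⁆} = ⊤ ∧
    -- … hence every linear map `α : 𝔰 → ℂ` vanishing on these elements is zero:
    ∀ α : 𝔰 →ₗ[ℝ] ℂ,
      (∀ (X : 𝔰) (Y : 𝔤), σ Y = Y → α (proj ⁅(X : 𝔤), Y⁆) = 0) → α = 0 := by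
  have h𝔞𝔰 : 𝔞.toSubmodule ≤ 𝔰.toSubmodule := by rw [h𝔰]; exact le_sup_left
  have hroot𝔰 : ∀ lam ∈ posRootSet 𝔞 φ Hv, rootSpace' 𝔞 lam ≤ 𝔰.toSubmodule := fun lam hlam => by
    rw [h𝔰]; exact (le_biSup (rootSpace' 𝔞) hlam).trans le_sup_right
  have hprojk : ∀ Y : 𝔤, σ Y = Y → proj Y = 0 := fun Y =>
    proj_eq_zero_of_map_eq_self hσpos h𝔞ab h𝔞p hHv h𝔰 hproj𝔨
  have hle : 𝔰.toSubmodule ≤ (projBracketSpan σ 𝔰 proj).map 𝔰.toSubmodule.subtype := by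
    conv_lhs => rw [h𝔰]
    exact sup_le
      (toSubmodule_le_map_projBracketSpan hσinv hσpos h𝔞ab h𝔞p h𝔞max hHv h𝔞𝔰 hproj𝔰 hroot𝔰)
      (iSup₂_le fun lam hlam => rootSpace'_le_map_projBracketSpan hσinv h𝔞p h𝔞𝔰 hproj𝔰 hprojk
        hlam.1 (hroot𝔰 lam hlam))
  have hspan : projBracketSpan σ 𝔰 proj = ⊤ := eq_top_iff.mpr fun S _ => by
    obtain ⟨T, hT, hTS⟩ := hle S.2
    rwa [← Subtype.ext hTS]
  refine ⟨hspan, fun α hα => LinearMap.ker_eq_top.mp (eq_top_iff.mpr ?_)⟩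
  rw [← hspan]
  exact Submodule.span_le.mpr fun _ ⟨X, Y, hY, hS⟩ => hS ▸ hα X Y hY

/-- The set `{[[X, Y]]_𝔰 : X ∈ 𝔰, Y ∈ 𝔨}` spans `𝔰`; consequently every
`ℝ`-linear map `α : 𝔰 → ℂ` vanishing on all such elements vanishes identically. -/
theorem statement7
    (𝔤 : Type) [LieRing 𝔤] [LieAlgebra ℝ 𝔤] [Module.Finite ℝ 𝔤]
    [LieAlgebra.IsSemisimple ℝ 𝔤]
    -- `σ` is a Cartan involution of `𝔤`:
    (σ : 𝔤 →ₗ⁅ℝ⁆ 𝔤) (hσinv : ∀ X, σ (σ X) = X)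
    (hσpos : ∀ X : 𝔤, X ≠ 0 → 0 < -(killingForm ℝ 𝔤 X (σ X)))
    -- `𝔞` is a maximal abelian subalgebra contained in `𝔭 = {X : σ X = -X}`:
    (𝔞 : LieSubalgebra ℝ 𝔤)
    (h𝔞ab : ∀ X Y : 𝔤, X ∈ 𝔞 → Y ∈ 𝔞 → ⁅X, Y⁆ = 0)
    (h𝔞p : ∀ X ∈ 𝔞, σ X = -X)
    (h𝔞max : ∀ 𝔟 : LieSubalgebra ℝ 𝔤, (∀ X Y : 𝔤, X ∈ 𝔟 → Y ∈ 𝔟 → ⁅X, Y⁆ = 0) →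
      (∀ X ∈ 𝔟, σ X = -X) → 𝔞 ≤ 𝔟 → 𝔟 = 𝔞)
    -- `φ` is a basis of `𝔞*` and `Hv lam = H_λ` is determined by the Killing form:
    (r : ℕ) (φ : Module.Basis (Fin r) ℝ (Module.Dual ℝ 𝔞))
    (Hv : Module.Dual ℝ 𝔞 → 𝔞)
    (hHv : ∀ (lam : Module.Dual ℝ 𝔞) (H : 𝔞),
      killingForm ℝ 𝔤 (Hv lam : 𝔤) (H : 𝔤) = lam H)
    -- `𝔰` is the Iwasawa subalgebra `𝔞 ⊕ 𝔫`:
    (𝔰 : LieSubalgebra ℝ 𝔤) (h𝔰 : 𝔰.toSubmodule = 𝔞.toSubmodule ⊔ nSub 𝔞 φ Hv)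
    -- `proj = [·]_𝔰` is the projection of `𝔤` onto `𝔰` along `𝔨` (Iwasawa decomposition):
    (proj : 𝔤 →ₗ[ℝ] 𝔰)
    (hproj𝔨 : ∀ X : 𝔤, σ (X - (proj X : 𝔤)) = X - (proj X : 𝔤))
    (hproj𝔰 : ∀ S : 𝔰, proj (S : 𝔤) = S) :
    -- `{[[X, Y]]_𝔰 : X ∈ 𝔰, Y ∈ 𝔨}` spans `𝔰` …
    Submodule.span ℝ {S : 𝔰 | ∃ X : 𝔰, ∃ Y : 𝔤, σ Y = Y ∧ S = proj ⁅(X : 𝔤), Y⁆} = ⊤ ∧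
    -- … hence every linear map `α : 𝔰 → ℂ` vanishing on these elements is zero:
    ∀ α : 𝔰 →ₗ[ℝ] ℂ,
      (∀ (X : 𝔰) (Y : 𝔤), σ Y = Y → α (proj ⁅(X : 𝔤), Y⁆) = 0) → α = 0 :=
  statement7_general 𝔤 σ hσinv hσpos 𝔞 h𝔞ab h𝔞p h𝔞max r φ Hv hHv 𝔰 h𝔰 proj hproj𝔨 hproj𝔰
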